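/- Assume f : ℝⁿ → ℝ and g : ℝᵐ → ℝ are differentiable convex functions with ∇f L₁-Lipschitz and ∇g L₂-Lipschitz, α, β, ε : [t₀, ∞) → (0, ∞) are C¹, θ > 0 and t₀ > 0 are constants, K : ℝⁿ → ℝᵐ is linear with adjoint K*, α(t) ≥ (1 + θ)/(θ t), β′(t)/β(t) ≤ (1 − 2θ)/(θ t), and α(t) + tα′(t) ≤ tβ(t)ε(t) for all t ≥ t₀, and ε is nonincreasing with ∫_{t₀}^∞ (β(t)ε(t)/t) dt < ∞. Let (x(t), y(t)) be a twice continuously differentiable global solution of the dynamical system (15) and (x*, y*) a saddle point of L. Then lim_{t→∞} β(t)(L(x(t), y*) − L(x*, y(t))) = 0; in particular, if liminf_{t→∞} β(t) ≠ 0 then lim_{t→∞} (L(x(t), y*) − L(x*, y(t))) = 0, and if lim_{t→∞} β(t) = +∞ then L(x(t), y*) − L(x*, y(t)) = o(1/β(t)), ‖∇f(x(t)) − ∇f(x*)‖ = o(1/√β(t)), and ‖∇g(y(t)) − ∇g(y*)‖ = o(1/√β(t)) as t → ∞. -/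

import Mathlib

open scoped RealInnerProductSpace
open MeasureTheory Filter Asymptotics

noncomputable section

/-- The bilinear Lagrangian `L(x, y) = f(x) + ⟨Kx, y⟩ - g(y)`. -/
def Lag {n m : ℕ} (f : EuclideanSpace ℝ (Fin n) → ℝ) (g : EuclideanSpace ℝ (Fin m) → ℝ)
    (K : EuclideanSpace ℝ (Fin n) →L[ℝ] EuclideanSpace ℝ (Fin m))
    (x : EuclideanSpace ℝ (Fin n)) (y : EuclideanSpace ℝ (Fin m)) : ℝ :=
  f x + ⟪K x, y⟫ - g y

/-- `(x*, y*)` is a saddle point of the Lagrangian `L`: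
`L(x*, y) ≤ L(x*, y*) ≤ L(x, y*)` for all `(x, y)`. -/
def IsSaddle {n m : ℕ} (f : EuclideanSpace ℝ (Fin n) → ℝ) (g : EuclideanSpace ℝ (Fin m) → ℝ)
    (K : EuclideanSpace ℝ (Fin n) →L[ℝ] EuclideanSpace ℝ (Fin m))
    (xs : EuclideanSpace ℝ (Fin n)) (ys : EuclideanSpace ℝ (Fin m)) : Prop :=
  ∀ x y, Lag f g K xs y ≤ Lag f g K xs ys ∧ Lag f g K xs ys ≤ Lag f g K x ys

/-- `(x, y)` is a twice continuously differentiable global solution on `[t₀, ∞)` of the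
Tikhonov regularized second-order primal-dual dynamical system (15):
`ẍ + α(t)ẋ + β(t)[∇f(x) + ε(t)x + K*(y + θtẏ)] = 0`,
`ÿ + α(t)ẏ − β(t)[K(x + θtẋ) − ∇g(y) − ε(t)y] = 0`. -/
def IsSol {n m : ℕ} (t₀ θ : ℝ)
    (f : EuclideanSpace ℝ (Fin n) → ℝ) (g : EuclideanSpace ℝ (Fin m) → ℝ)
    (K : EuclideanSpace ℝ (Fin n) →L[ℝ] EuclideanSpace ℝ (Fin m))
    (α β ε : ℝ → ℝ)
    (x : ℝ → EuclideanSpace ℝ (Fin n)) (y : ℝ → EuclideanSpace ℝ (Fin m)) : Prop :=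
  ContDiffOn ℝ 2 x (Set.Ici t₀) ∧ ContDiffOn ℝ 2 y (Set.Ici t₀) ∧
  ∀ t ≥ t₀,
    deriv (deriv x) t + α t • deriv x t
      + β t • (gradient f (x t) + ε t • x t
        + (ContinuousLinearMap.adjoint K) (y t + (θ * t) • deriv y t)) = 0 ∧
    deriv (deriv y) t + α t • deriv y t
      - β t • (K (x t + (θ * t) • deriv x t) - gradient g (y t) - ε t • y t) = 0

section Auxiliary

variable {F : Type*} [NormedAddCommGroup F] [InnerProductSpace ℝ F] [CompleteSpace F]


variable {F : Type*} [NormedAddCommGroup F] [InnerProductSpace ℝ F] [CompleteSpace F]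

lemma grad_chain {f : F → ℝ} (hf : Differentiable ℝ f) {x : ℝ → F} {p : F} {t : ℝ}
    (hx : HasDerivAt x p t) :
    HasDerivAt (fun s => f (x s)) ⟪gradient f (x t), p⟫ t := by
  have h := (hf (x t)).hasFDerivAt.comp_hasDerivAt t hx
  have : ⟪gradient f (x t), p⟫ = fderiv ℝ f (x t) p := by
    rw [gradient, InnerProductSpace.toDual_symm_apply]
  rwa [this]

lemma grad_ineq {f : F → ℝ} (hf : Differentiable ℝ f) (hc : ConvexOn ℝ Set.univ f)
    (u v : F) : f u + ⟪gradient f u, v - u⟫ ≤ f v := by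
  set φ : ℝ → ℝ := fun s => f (u + s • (v - u)) with hφ
  have hpath : ∀ s : ℝ, HasDerivAt (fun r : ℝ => u + r • (v - u)) (v - u) s := by
    intro s
    simpa using ((hasDerivAt_id s).smul_const (v - u)).const_add u
  have hder : ∀ s : ℝ, HasDerivAt φ ⟪gradient f (u + s • (v - u)), v - u⟫ s :=
    fun s => grad_chain hf (hpath s)
  have hconv : ConvexOn ℝ Set.univ φ := by
    have := hc.comp_affineMap (AffineMap.lineMap u v)
    have heq : φ = f ∘ (AffineMap.lineMap u v) := by
      funext s
      simp [hφ, AffineMap.lineMap_apply, add_comm]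
    rw [heq]
    simpa using this
  have hs := hconv.le_slope_of_hasDerivAt (Set.mem_univ (0:ℝ)) (Set.mem_univ (1:ℝ))
    one_pos (hder 0)
  have h0 : φ 0 = f u := by simp [hφ]
  have h1 : φ 1 = f v := by simp [hφ]
  rw [slope_def_field] at hs
  simp only [h0, h1, zero_smul, add_zero] at hs
  have : ⟪gradient f u, v - u⟫ ≤ f v - f u := by
    simpa using hs
  linarith

lemma descent_lemma {f : F → ℝ} (hf : Differentiable ℝ f) {L : ℝ} (hL : 0 < L)
    (hLip : ∀ u v, ‖gradient f u - gradient f v‖ ≤ L * ‖u - v‖) (w d : F) :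
    f (w + d) ≤ f w + ⟪gradient f w, d⟫ + L / 2 * ‖d‖ ^ 2 := by
  set ψ : ℝ → ℝ := fun s => f (w + s • d) - s * ⟪gradient f w, d⟫ - s ^ 2 * (L / 2) * ‖d‖ ^ 2
    with hψ
  have hpath : ∀ s : ℝ, HasDerivAt (fun r : ℝ => w + r • d) d s := by
    intro s; simpa using ((hasDerivAt_id s).smul_const d).const_add w
  have hder : ∀ s : ℝ, HasDerivAt ψ
      (⟪gradient f (w + s • d), d⟫ - ⟪gradient f w, d⟫ - 2 * s * (L / 2) * ‖d‖ ^ 2) s := by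
    intro s
    have h1 := grad_chain hf (hpath s)
    have h2 : HasDerivAt (fun r : ℝ => r * ⟪gradient f w, d⟫) ⟪gradient f w, d⟫ s := by
      simpa using (hasDerivAt_id s).mul_const ⟪gradient f w, d⟫
    have h3 : HasDerivAt (fun r : ℝ => r ^ 2 * (L / 2) * ‖d‖ ^ 2)
        (2 * s * (L / 2) * ‖d‖ ^ 2) s := by
      have := ((hasDerivAt_pow 2 s).mul_const (L / 2)).mul_const (‖d‖ ^ 2)
      simpa [mul_comm, mul_assoc, mul_left_comm] using this
    exact (h1.sub h2).sub h3
  have hanti : AntitoneOn ψ (Set.Icc 0 1) := by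
    apply antitoneOn_of_deriv_nonpos (convex_Icc 0 1)
    · exact fun s _ => ((hder s).continuousAt).continuousWithinAt
    · intro s _
      exact ((hder s).differentiableAt).differentiableWithinAt
    · intro s hs
      rw [interior_Icc] at hs
      rw [(hder s).deriv]
      have hb : ⟪gradient f (w + s • d) - gradient f w, d⟫ ≤ L * s * ‖d‖ ^ 2 := by
        calc ⟪gradient f (w + s • d) - gradient f w, d⟫
            ≤ ‖gradient f (w + s • d) - gradient f w‖ * ‖d‖ := real_inner_le_norm _ _
          _ ≤ (L * ‖(w + s • d) - w‖) * ‖d‖ := by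
              gcongr; exact hLip _ _
          _ = L * s * ‖d‖ ^ 2 := by
              rw [add_sub_cancel_left, norm_smul, Real.norm_eq_abs, abs_of_pos hs.1]
              ring
        
      rw [inner_sub_left] at hb
      nlinarith [hb]
  have h01 := hanti (Set.mem_Icc.2 ⟨le_refl (0:ℝ), zero_le_one⟩)
    (Set.mem_Icc.2 ⟨zero_le_one, le_refl (1:ℝ)⟩) zero_le_one
  simp only [hψ, zero_smul, add_zero, one_smul, zero_mul, sub_zero, one_pow, zero_pow,
    one_mul] at h01
  linarith

lemma grad_sq_le {f : F → ℝ} (hf : Differentiable ℝ f) (hc : ConvexOn ℝ Set.univ f)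
    {L : ℝ} (hL : 0 < L)
    (hLip : ∀ u v, ‖gradient f u - gradient f v‖ ≤ L * ‖u - v‖) (u v : F) :
    ‖gradient f u - gradient f v‖ ^ 2 ≤ 2 * L * (f u - f v - ⟪gradient f v, u - v⟫) := by
  set G := gradient f u - gradient f v with hG
  set d := -(L⁻¹ • G) with hd
  have h1 : f (u + d) ≤ f u + ⟪gradient f u, d⟫ + L / 2 * ‖d‖ ^ 2 :=
    descent_lemma hf hL hLip u d
  have h2 : f v + ⟪gradient f v, (u + d) - v⟫ ≤ f (u + d) := grad_ineq hf hc v (u + d)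
  have hdn : ‖d‖ ^ 2 = L⁻¹ ^ 2 * ‖G‖ ^ 2 := by
    rw [hd, norm_neg, norm_smul, Real.norm_eq_abs, abs_of_pos (inv_pos.2 hL), mul_pow]
  have hGd : ⟪G, d⟫ = -(L⁻¹ * ‖G‖ ^ 2) := by
    rw [hd, inner_neg_right, real_inner_smul_right, real_inner_self_eq_norm_sq]
  have hsplit : ⟪gradient f v, (u + d) - v⟫ = ⟪gradient f v, u - v⟫ + ⟪gradient f v, d⟫ := by
    rw [show (u + d) - v = (u - v) + d by abel, inner_add_right]
  rw [hsplit] at h2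
  have key : ⟪G, d⟫ + L / 2 * ‖d‖ ^ 2 ≥ -(f u - f v - ⟪gradient f v, u - v⟫) := by
    have : ⟪gradient f u, d⟫ = ⟪gradient f v, d⟫ + ⟪G, d⟫ := by
      rw [hG, inner_sub_left]; ring
    nlinarith [h1, h2, this]
  rw [hGd, hdn] at key
  have h3 : L⁻¹ * ‖G‖ ^ 2 - L / 2 * (L⁻¹ ^ 2 * ‖G‖ ^ 2) = ‖G‖ ^ 2 / (2 * L) := by
    field_simp
    ring
  have h4 : ‖G‖ ^ 2 / (2 * L) ≤ f u - f v - ⟪gradient f v, u - v⟫ := by linarith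
  rw [div_le_iff₀ (by positivity)] at h4
  linarith





lemma antitone_deriv_nonpos {ε : ℝ → ℝ} {t₀ t e' : ℝ} (h : AntitoneOn ε (Set.Ici t₀))
    (ht : t₀ < t) (hd : HasDerivAt ε e' t) : e' ≤ 0 := by
  have hs := hasDerivAt_iff_tendsto_slope.1 hd
  have hs' : Tendsto (slope ε t) (nhdsWithin t (Set.Ioi t)) (nhds e') :=
    hs.mono_left (nhdsWithin_mono t fun u hu => ne_of_gt hu)
  refine le_of_tendsto hs' ?_
  filter_upwards [self_mem_nhdsWithin] with u hu
  have h1 : ε u ≤ ε t := h (le_of_lt ht) (le_of_lt (ht.trans hu)) (le_of_lt hu)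
  rw [slope_def_field]
  apply div_nonpos_of_nonpos_of_nonneg <;> simp [h1, sub_nonneg, le_of_lt (show t < u from hu)]

lemma cd2_deriv {G : Type*} [NormedAddCommGroup G] [NormedSpace ℝ G] {x : ℝ → G} {t₀ : ℝ} (hx : ContDiffOn ℝ 2 x (Set.Ici t₀)) {t : ℝ}
    (ht : t₀ < t) :
    HasDerivAt x (deriv x t) t ∧ HasDerivAt (deriv x) (deriv (deriv x) t) t ∧
      ContinuousAt (deriv x) t := by
  have hx' : ContDiffOn ℝ 2 x (Set.Ioi t₀) := hx.mono Set.Ioi_subset_Ici_self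
  have hmem : Set.Ioi t₀ ∈ nhds t := isOpen_Ioi.mem_nhds ht
  have h1 : HasDerivAt x (deriv x t) t :=
    ((hx'.differentiableOn (by norm_num)).differentiableAt hmem).hasDerivAt
  have hd : ContDiffOn ℝ 1 (deriv x) (Set.Ioi t₀) :=
    hx'.deriv_of_isOpen isOpen_Ioi (by norm_num)
  have h2 : DifferentiableAt ℝ (deriv x) t :=
    (hd.differentiableOn (by norm_num)).differentiableAt hmem
  exact ⟨h1, h2.hasDerivAt, h2.continuousAt⟩

lemma cd1_deriv {α : ℝ → ℝ} {t₀ : ℝ} (hα : ContDiffOn ℝ 1 α (Set.Ici t₀)) {t : ℝ}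
    (ht : t₀ < t) : HasDerivAt α (deriv α t) t :=
  ((hα.differentiableOn (by norm_num)).differentiableAt
    (Filter.mem_of_superset (isOpen_Ioi.mem_nhds ht) Set.Ioi_subset_Ici_self)).hasDerivAt

end Auxiliary

/-- The Lyapunov energy function. -/
def EnFn {n m : ℕ} (θ : ℝ) (α β ε : ℝ → ℝ) (f : EuclideanSpace ℝ (Fin n) → ℝ)
    (g : EuclideanSpace ℝ (Fin m) → ℝ)
    (K : EuclideanSpace ℝ (Fin n) →L[ℝ] EuclideanSpace ℝ (Fin m))
    (x : ℝ → EuclideanSpace ℝ (Fin n)) (y : ℝ → EuclideanSpace ℝ (Fin m))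
    (xs : EuclideanSpace ℝ (Fin n)) (ys : EuclideanSpace ℝ (Fin m)) : ℝ → ℝ := fun s =>
  θ ^ 2 * s ^ 2 * β s * (f (x s) - f xs + (g (y s) - g ys)
      + (⟪K (x s), ys⟫ - ⟪K xs, y s⟫) + ε s / 2 * (⟪x s, x s⟫ + ⟪y s, y s⟫))
    + (1/2) * ⟪x s - xs + (θ * s) • deriv x s, x s - xs + (θ * s) • deriv x s⟫
    + (1/2) * ⟪y s - ys + (θ * s) • deriv y s, y s - ys + (θ * s) • deriv y s⟫
    + (θ * s * α s - 1 - θ) / 2 * (⟪x s - xs, x s - xs⟫ + ⟪y s - ys, y s - ys⟫)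

set_option maxHeartbeats 2000000 in
lemma energy_deriv {n m : ℕ} {θ t : ℝ} (hθ : 0 < θ) (ht : 0 < t)
    {f : EuclideanSpace ℝ (Fin n) → ℝ} {g : EuclideanSpace ℝ (Fin m) → ℝ}
    {K : EuclideanSpace ℝ (Fin n) →L[ℝ] EuclideanSpace ℝ (Fin m)}
    {α β ε : ℝ → ℝ} {x : ℝ → EuclideanSpace ℝ (Fin n)} {y : ℝ → EuclideanSpace ℝ (Fin m)}
    {xs : EuclideanSpace ℝ (Fin n)} {ys : EuclideanSpace ℝ (Fin m)}
    (hf : Differentiable ℝ f) (hg : Differentiable ℝ g)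
    (hx1 : HasDerivAt x (deriv x t) t)
    (hx2 : HasDerivAt (deriv x) (-(α t • deriv x t) - β t • (gradient f (x t) + ε t • x t
        + (ContinuousLinearMap.adjoint K) (y t + (θ * t) • deriv y t))) t)
    (hy1 : HasDerivAt y (deriv y t) t)
    (hy2 : HasDerivAt (deriv y) (-(α t • deriv y t) + β t • (K (x t + (θ * t) • deriv x t)
        - gradient g (y t) - ε t • y t)) t)
    (hαd : HasDerivAt α (deriv α t) t) (hβd : HasDerivAt β (deriv β t) t)
    (hεd : HasDerivAt ε (deriv ε t) t)
    (hαt : 1 + θ ≤ θ * t * α t)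
    (hb' : deriv β t * (θ * t) ≤ (1 - 2 * θ) * β t)
    (hαε : α t + t * deriv α t ≤ t * β t * ε t)
    (he' : deriv ε t ≤ 0)
    (hB : 0 < β t) (hEps : 0 < ε t)
    (hV : 0 ≤ f (x t) - f xs + (g (y t) - g ys) + (⟪K (x t), ys⟫ - ⟪K xs, y t⟫))
    (hcf : f (x t) + ⟪gradient f (x t), xs - x t⟫ ≤ f xs)
    (hcg : g (y t) + ⟪gradient g (y t), ys - y t⟫ ≤ g ys) :
    ∃ D, HasDerivAt (EnFn θ α β ε f g K x y xs ys) D t ∧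
      D ≤ θ * t * β t * ε t * (⟪xs, xs⟫ + ⟪ys, ys⟫) / 2 := by
  have hpoly : HasDerivAt (fun s : ℝ => θ ^ 2 * s ^ 2) (θ ^ 2 * (2 * t)) t := by
    simpa [mul_assoc, mul_comm] using (hasDerivAt_pow 2 t).const_mul (θ ^ 2)
  have hA := hpoly.mul hβd
  have hKx : HasDerivAt (fun s => K (x s)) (K (deriv x t)) t :=
    K.hasFDerivAt.comp_hasDerivAt t hx1
  have hKxys := hKx.inner ℝ (hasDerivAt_const t ys)
  have hKxsy := (hasDerivAt_const t (K xs)).inner ℝ hy1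
  have hXX := hx1.inner ℝ hx1
  have hYY := hy1.inner ℝ hy1
  have hW := ((((grad_chain hf hx1).sub_const (f xs)).add
      ((grad_chain hg hy1).sub_const (g ys))).add (hKxys.sub hKxsy)).add
      ((hεd.div_const 2).mul (hXX.add hYY))
  have hu1 := (hx1.sub_const xs).add (((hasDerivAt_id t).const_mul θ).smul hx2)
  have hu2 := (hy1.sub_const ys).add (((hasDerivAt_id t).const_mul θ).smul hy2)
  have hU1 := (hu1.inner ℝ hu1).const_mul (1/2 : ℝ)
  have hU2 := (hu2.inner ℝ hu2).const_mul (1/2 : ℝ)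
  have hcfun := ((((hasDerivAt_id t).const_mul θ).mul hαd).sub_const (1:ℝ)).sub_const θ
  have hXmX := (hx1.sub_const xs).inner ℝ (hx1.sub_const xs)
  have hYmY := (hy1.sub_const ys).inner ℝ (hy1.sub_const ys)
  have hlast := (hcfun.div_const 2).mul (hXmX.add hYmY)
  have hE := (((hA.mul hW).add hU1).add hU2).add hlast
  refine ⟨_, by unfold EnFn; exact hE, ?_⟩
  have hθt : (0:ℝ) < θ * t := mul_pos hθ ht
  have hiXX : (0:ℝ) ≤ ⟪x t, x t⟫ := real_inner_self_nonneg
  have hiYY : (0:ℝ) ≤ ⟪y t, y t⟫ := real_inner_self_nonneg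
  have hiPP : (0:ℝ) ≤ ⟪deriv x t, deriv x t⟫ := real_inner_self_nonneg
  have hiQQ : (0:ℝ) ≤ ⟪deriv y t, deriv y t⟫ := real_inner_self_nonneg
  have hiXs : (0:ℝ) ≤ ⟪x t - xs, x t - xs⟫ := real_inner_self_nonneg
  have hiYs : (0:ℝ) ≤ ⟪y t - ys, y t - ys⟫ := real_inner_self_nonneg
  have hW0 : 0 ≤ f (x t) - f xs + (g (y t) - g ys) + (⟪K (x t), ys⟫ - ⟪K xs, y t⟫)
      + ε t / 2 * (⟪x t, x t⟫ + ⟪y t, y t⟫) := by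
    have h9 := mul_nonneg hEps.le (add_nonneg hiXX hiYY)
    linarith
  have hcoef : θ ^ 2 * (2 * t) * β t + θ ^ 2 * t ^ 2 * deriv β t ≤ θ * t * β t := by
    nlinarith [mul_le_mul_of_nonneg_left hb' hθt.le]
  have T1 := mul_le_mul_of_nonneg_right hcoef hW0
  have T2 : 0 ≤ θ ^ 2 * t ^ 2 * β t / 2 * (⟪x t, x t⟫ + ⟪y t, y t⟫) * (-(deriv ε t)) :=
    mul_nonneg (mul_nonneg (by positivity) (add_nonneg hiXX hiYY)) (neg_nonneg.2 he')
  have T3 := mul_le_mul_of_nonneg_right hαt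
    (mul_nonneg hθt.le (add_nonneg hiPP hiQQ))
  have T4 := mul_le_mul_of_nonneg_left hcf (mul_nonneg hθt.le hB.le)
  have T5 := mul_le_mul_of_nonneg_left hcg (mul_nonneg hθt.le hB.le)
  have T6 := mul_le_mul_of_nonneg_right hαε
    (mul_nonneg (by positivity : (0:ℝ) ≤ θ / 2) (add_nonneg hiXs hiYs))
  simp only [id_eq, mul_one, inner_add_left, inner_add_right, inner_sub_left,
    inner_sub_right, inner_neg_left, inner_neg_right, real_inner_smul_left,
    real_inner_smul_right, Pi.add_apply, Pi.sub_apply, Pi.mul_apply, Pi.smul_apply',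
    Pi.neg_apply, inner_zero_left, inner_zero_right, map_add, map_sub,
    _root_.map_smul, ContinuousLinearMap.adjoint_inner_left,
    ContinuousLinearMap.adjoint_inner_right, real_inner_comm] at T1 T2 T3 T4 T5 T6 ⊢
  linarith [T1, T2, T3, T4, T5, T6]

set_option maxHeartbeats 1000000 in
/-- Theorem 3.2(2): under the slow-decay condition
`∫ β(t)ε(t)/t dt < ∞`, `β(t)(L(x(t), y*) − L(x*, y(t))) → 0`; if `liminf β ≠ 0` the gap
tends to `0`, and if `β(t) → ∞` the gap is `o(1/β(t))` and the gradient residuals are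
`o(1/√β(t))`. -/
theorem stmt_16 {n m : ℕ} (t₀ θ L₁ L₂ : ℝ) (ht₀ : 0 < t₀) (hθ : 0 < θ)
    (hL₁ : 0 < L₁) (hL₂ : 0 < L₂)
    (f : EuclideanSpace ℝ (Fin n) → ℝ) (g : EuclideanSpace ℝ (Fin m) → ℝ)
    (hf : Differentiable ℝ f) (hg : Differentiable ℝ g)
    (hfconv : ConvexOn ℝ Set.univ f) (hgconv : ConvexOn ℝ Set.univ g)
    (K : EuclideanSpace ℝ (Fin n) →L[ℝ] EuclideanSpace ℝ (Fin m))
    (α β ε : ℝ → ℝ)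
    (hαC1 : ContDiffOn ℝ 1 α (Set.Ici t₀)) (hβC1 : ContDiffOn ℝ 1 β (Set.Ici t₀))
    (hεC1 : ContDiffOn ℝ 1 ε (Set.Ici t₀))
    (hαpos : ∀ t ≥ t₀, 0 < α t) (hβpos : ∀ t ≥ t₀, 0 < β t) (hεpos : ∀ t ≥ t₀, 0 < ε t)
    (hα : ∀ t ≥ t₀, (1 + θ) / (θ * t) ≤ α t)
    (hfLip : ∀ u v, ‖gradient f u - gradient f v‖ ≤ L₁ * ‖u - v‖)
    (hgLip : ∀ u v, ‖gradient g u - gradient g v‖ ≤ L₂ * ‖u - v‖)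
    (hβ' : ∀ t ≥ t₀, deriv β t / β t ≤ (1 - 2 * θ) / (θ * t))
    (hαε : ∀ t ≥ t₀, α t + t * deriv α t ≤ t * β t * ε t)
    (hεanti : AntitoneOn ε (Set.Ici t₀))
    (hεint : IntegrableOn (fun t => β t * ε t / t) (Set.Ioi t₀))
    (hΩ : ∃ p : EuclideanSpace ℝ (Fin n) × EuclideanSpace ℝ (Fin m),
      IsSaddle f g K p.1 p.2)
    (x : ℝ → EuclideanSpace ℝ (Fin n)) (y : ℝ → EuclideanSpace ℝ (Fin m))
    (hsol : IsSol t₀ θ f g K α β ε x y)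
    (xs : EuclideanSpace ℝ (Fin n)) (ys : EuclideanSpace ℝ (Fin m))
    (hsaddle : IsSaddle f g K xs ys) :
    Tendsto (fun t => β t * (Lag f g K (x t) ys - Lag f g K xs (y t))) atTop (nhds 0) ∧
    (atTop.liminf β ≠ 0 →
      Tendsto (fun t => Lag f g K (x t) ys - Lag f g K xs (y t)) atTop (nhds 0)) ∧
    (Tendsto β atTop atTop →
      ((fun t => Lag f g K (x t) ys - Lag f g K xs (y t)) =o[atTop] fun t => 1 / β t) ∧
      ((fun t => ‖gradient f (x t) - gradient f xs‖) =o[atTop]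
        fun t => 1 / Real.sqrt (β t)) ∧
      ((fun t => ‖gradient g (y t) - gradient g ys‖) =o[atTop]
        fun t => 1 / Real.sqrt (β t))) := by
  set V : ℝ → ℝ := fun s => Lag f g K (x s) ys - Lag f g K xs (y s) with hVdef
  set C : ℝ := ⟪xs, xs⟫ + ⟪ys, ys⟫ with hCdef
  set σ : ℝ → ℝ := fun s => θ * s * β s * ε s * C / 2 with hσdef
  set E : ℝ → ℝ := EnFn θ α β ε f g K x y xs ys with hEdef
  have hC0 : 0 ≤ C := add_nonneg real_inner_self_nonneg real_inner_self_nonneg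
  -- V is nonnegative
  have hV0 : ∀ s, 0 ≤ V s := by
    intro s
    have h1 := (hsaddle (x s) (y s)).1
    have h2 := (hsaddle (x s) (y s)).2
    simp only [hVdef]
    linarith
  -- V in explicit form
  have hVexp : ∀ s, V s = f (x s) - f xs + (g (y s) - g ys)
      + (⟪K (x s), ys⟫ - ⟪K xs, y s⟫) := by
    intro s; simp only [hVdef, Lag]; ring
  -- the energy derivative bound
  have F2 : ∀ t ∈ Set.Ioi t₀, ∃ D, HasDerivAt E D t ∧ D ≤ σ t := by
    intro t ht
    rw [Set.mem_Ioi] at ht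
    have htpos : 0 < t := ht₀.trans ht
    have hx12 := cd2_deriv hsol.1 ht
    have hy12 := cd2_deriv hsol.2.1 ht
    have hODE := hsol.2.2 t ht.le
    have hRx : deriv (deriv x) t = -(α t • deriv x t) - β t • (gradient f (x t) + ε t • x t
        + (ContinuousLinearMap.adjoint K) (y t + (θ * t) • deriv y t)) := by
      apply eq_of_sub_eq_zero
      rw [← hODE.1]
      abel
    have hRy : deriv (deriv y) t = -(α t • deriv y t) + β t • (K (x t + (θ * t) • deriv x t)
        - gradient g (y t) - ε t • y t) := by
      apply eq_of_sub_eq_zero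
      rw [← hODE.2]
      abel
    have hx2' : HasDerivAt (deriv x) (-(α t • deriv x t) - β t • (gradient f (x t) + ε t • x t
        + (ContinuousLinearMap.adjoint K) (y t + (θ * t) • deriv y t))) t := by
      rw [← hRx]; exact hx12.2.1
    have hy2' : HasDerivAt (deriv y) (-(α t • deriv y t) + β t • (K (x t + (θ * t) • deriv x t)
        - gradient g (y t) - ε t • y t)) t := by
      rw [← hRy]; exact hy12.2.1
    have hαt' : 1 + θ ≤ θ * t * α t := by
      have h := hα t ht.le
      rw [div_le_iff₀ (by positivity)] at h
      nlinarith
    have hb'' : deriv β t * (θ * t) ≤ (1 - 2 * θ) * β t := by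
      have h := hβ' t ht.le
      rw [div_le_div_iff₀ (hβpos t ht.le) (by positivity)] at h
      linarith
    have he' : deriv ε t ≤ 0 := antitone_deriv_nonpos hεanti ht (cd1_deriv hεC1 ht)
    have hVt : 0 ≤ f (x t) - f xs + (g (y t) - g ys) + (⟪K (x t), ys⟫ - ⟪K xs, y t⟫) := by
      have := hV0 t
      rw [hVexp t] at this
      linarith
    obtain ⟨D, hD, hDle⟩ := energy_deriv hθ htpos hf hg hx12.1 hx2' hy12.1 hy2'
      (cd1_deriv hαC1 ht) (cd1_deriv hβC1 ht) (cd1_deriv hεC1 ht) hαt' hb''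
      (hαε t ht.le) he' (hβpos t ht.le) (hεpos t ht.le) hVt
      (grad_ineq hf hfconv (x t) xs) (grad_ineq hg hgconv (y t) ys)
    exact ⟨D, hD, hDle.trans_eq (by simp only [hσdef, hCdef])⟩
  -- σ is continuous on Ici t₀
  have hσcont : ContinuousOn σ (Set.Ici t₀) := by
    have hβc := hβC1.continuousOn
    have hεc := hεC1.continuousOn
    exact ((((continuousOn_const.mul continuous_id.continuousOn).mul hβc).mul
      hεc).mul continuousOn_const).div_const 2
  have huIcc : ∀ T, t₀ < T → ∀ s, T ≤ s → Set.uIcc T s ⊆ Set.Ici t₀ := by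
    intro T hT s hs u hu
    exact le_trans (le_min hT.le (hT.le.trans hs)) hu.1
  -- FTC derivative for the integral of σ
  have hFTC : ∀ T, t₀ < T → ∀ s, t₀ < s → T ≤ s →
      HasDerivAt (fun r => ∫ u in T..r, σ u) (σ s) s := by
    intro T hT s hs hTs
    refine intervalIntegral.integral_hasDerivAt_right
      ((hσcont.mono (huIcc T hT s hTs)).intervalIntegrable)
      ?_ (hσcont.continuousAt (Ici_mem_nhds hs))
    exact (hσcont.mono Set.Ioi_subset_Ici_self).stronglyMeasurableAtFilter isOpen_Ioi s hs
  -- the key quasi-decay of the energy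
  have F3 : ∀ T, t₀ < T → ∀ t, T ≤ t → E t ≤ E T + ∫ s in T..t, σ s := by
    intro T hT t htT
    have hGder : ∀ s, T ≤ s → ∃ D, HasDerivAt (fun r => E r - ∫ u in T..r, σ u) D s ∧ D ≤ 0 := by
      intro s hs
      have hs' : t₀ < s := hT.trans_le hs
      obtain ⟨D, hD, hDle⟩ := F2 s hs'
      exact ⟨D - σ s, hD.sub (hFTC T hT s hs' hs), by linarith⟩
    have hanti : AntitoneOn (fun r => E r - ∫ u in T..r, σ u) (Set.Ici T) := by
      apply antitoneOn_of_deriv_nonpos (convex_Ici T)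
      · intro s hs
        obtain ⟨D, hD, _⟩ := hGder s hs
        exact hD.continuousAt.continuousWithinAt
      · intro s hs
        rw [interior_Ici] at hs
        obtain ⟨D, hD, _⟩ := hGder s hs.le
        exact hD.differentiableAt.differentiableWithinAt
      · intro s hs
        rw [interior_Ici] at hs
        obtain ⟨D, hD, hDle⟩ := hGder s hs.le
        rw [hD.deriv]
        exact hDle
    have h := hanti (Set.self_mem_Ici) (Set.mem_Ici.2 htT) htT
    simp only [intervalIntegral.integral_same] at h
    linarith
  -- lower bound for the energy
  have F4 : ∀ t, t₀ < t → θ ^ 2 * t ^ 2 * (β t * V t) ≤ E t := by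
    intro t ht
    have hβt := hβpos t ht.le
    have hεt := hεpos t ht.le
    have hct : 0 ≤ θ * t * α t - 1 - θ := by
      have h := hα t ht.le
      rw [div_le_iff₀ (mul_pos hθ (ht₀.trans ht))] at h
      nlinarith
    have P1 : 0 ≤ θ ^ 2 * t ^ 2 * β t * (ε t / 2 * (⟪x t, x t⟫ + ⟪y t, y t⟫)) :=
      mul_nonneg (mul_nonneg (by positivity) hβt.le)
        (mul_nonneg (by linarith) (add_nonneg real_inner_self_nonneg real_inner_self_nonneg))
    have P2 : (0:ℝ) ≤ (1/2) * ⟪x t - xs + (θ * t) • deriv x t, x t - xs + (θ * t) • deriv x t⟫ :=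
      mul_nonneg (by norm_num) real_inner_self_nonneg
    have P3 : (0:ℝ) ≤ (1/2) * ⟪y t - ys + (θ * t) • deriv y t, y t - ys + (θ * t) • deriv y t⟫ :=
      mul_nonneg (by norm_num) real_inner_self_nonneg
    have P4 : (0:ℝ) ≤ (θ * t * α t - 1 - θ) / 2 * (⟪x t - xs, x t - xs⟫ + ⟪y t - ys, y t - ys⟫) :=
      mul_nonneg (by linarith) (add_nonneg real_inner_self_nonneg real_inner_self_nonneg)
    rw [hVexp t]
    simp only [hEdef, EnFn]
    linarith [P1, P2, P3, P4]
  set J : ℝ → ℝ := fun T => ∫ s in Set.Ioi T, β s * ε s / s with hJdef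
  have hJnn : ∀ T, t₀ ≤ T → 0 ≤ J T := by
    intro T hT
    apply setIntegral_nonneg measurableSet_Ioi
    intro s hs
    have hs' : t₀ < s := hT.trans_lt hs
    have : 0 < s := ht₀.trans hs'
    exact le_of_lt (div_pos (mul_pos (hβpos s hs'.le) (hεpos s hs'.le)) this)
  have F5 : ∀ T, t₀ < T → ∀ t, T ≤ t →
      (∫ s in T..t, σ s) ≤ t ^ 2 * (θ * C / 2) * J T := by
    intro T hT t htT
    have hIoc : Set.Ioc T t ⊆ Set.Ioi t₀ := fun u hu => hT.trans_le hu.1.le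
    have hInt1 : IntervalIntegrable σ volume T t :=
      (hσcont.mono (huIcc T hT t htT)).intervalIntegrable
    have hIocInt : IntegrableOn (fun s => β s * ε s / s) (Set.Ioc T t) := hεint.mono_set hIoc
    have hInt2 : IntervalIntegrable (fun s => t ^ 2 * (θ * C / 2) * (β s * ε s / s))
        volume T t := by
      rw [intervalIntegrable_iff_integrableOn_Ioc_of_le htT]
      exact hIocInt.const_mul _
    have hmono : (∫ s in T..t, σ s) ≤ ∫ s in T..t, t ^ 2 * (θ * C / 2) * (β s * ε s / s) := by
      apply intervalIntegral.integral_mono_on htT hInt1 hInt2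
      intro s hs
      have hs0 : 0 < s := lt_of_lt_of_le (ht₀.trans hT) hs.1
      have hst₀ : t₀ ≤ s := le_trans hT.le hs.1
      have hβε : 0 ≤ β s * ε s := mul_nonneg (hβpos s hst₀).le (hεpos s hst₀).le
      have e1 : t ^ 2 * (θ * C / 2) * (β s * ε s / s) = t ^ 2 * (β s * ε s) / s * (θ * C / 2) := by
        ring
      have e2 : σ s = s * (β s * ε s) * (θ * C / 2) := by simp only [hσdef]; ring
      rw [e1, e2]
      apply mul_le_mul_of_nonneg_right _ (by exact div_nonneg (mul_nonneg hθ.le hC0) (by norm_num))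
      rw [le_div_iff₀ hs0]
      nlinarith [hs.2, hs0, hβε, mul_nonneg (mul_nonneg (sub_nonneg.2 hs.2) (by linarith : (0:ℝ) ≤ t + s)) hβε]
    calc (∫ s in T..t, σ s) ≤ ∫ s in T..t, t ^ 2 * (θ * C / 2) * (β s * ε s / s) := hmono
      _ = t ^ 2 * (θ * C / 2) * ∫ s in T..t, β s * ε s / s := by
          rw [intervalIntegral.integral_const_mul]
      _ ≤ t ^ 2 * (θ * C / 2) * J T := by
          apply mul_le_mul_of_nonneg_left _ (by exact mul_nonneg (by positivity) (div_nonneg (mul_nonneg hθ.le hC0) (by norm_num)))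
          rw [intervalIntegral.integral_of_le htT]
          apply setIntegral_mono_set (hεint.mono_set (Set.Ioi_subset_Ioi hT.le))
          · rw [Filter.EventuallyLE]
            rw [ae_restrict_iff' measurableSet_Ioi]
            apply Filter.Eventually.of_forall
            intro s hs
            have hst₀ : t₀ ≤ s := (hT.trans hs).le
            have hs0 : 0 < s := ht₀.trans_le hst₀
            exact le_of_lt (div_pos (mul_pos (hβpos s hst₀) (hεpos s hst₀)) hs0)
          · exact HasSubset.Subset.eventuallyLE Set.Ioc_subset_Ioi_self
  have F6 : ∀ δ > (0:ℝ), ∃ T, t₀ < T ∧ J T ≤ δ := by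
    intro δ hδ
    have hlim := MeasureTheory.intervalIntegral_tendsto_integral_Ioi t₀ hεint tendsto_id
    have hev := (Metric.tendsto_nhds.mp hlim δ hδ).and (eventually_gt_atTop t₀)
    obtain ⟨T, hdT, hT⟩ := hev.exists
    refine ⟨T, hT, ?_⟩
    have hsplit := MeasureTheory.setIntegral_union (f := fun s => β s * ε s / s)
      (μ := volume) (Set.Ioc_disjoint_Ioi le_rfl) measurableSet_Ioi
      (hεint.mono_set Set.Ioc_subset_Ioi_self) (hεint.mono_set (Set.Ioi_subset_Ioi hT.le))
    rw [Set.Ioc_union_Ioi_eq_Ioi hT.le] at hsplit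
    have heq : (∫ s in t₀..T, β s * ε s / s) = ∫ s in Set.Ioc t₀ T, β s * ε s / s :=
      intervalIntegral.integral_of_le hT.le
    have hd := hdT
    rw [Real.dist_eq, abs_lt] at hd
    simp only [hJdef]
    simp only [id_eq] at heq hsplit hd
    linarith [hsplit, hd.1, hd.2]
  -- the key quantitative estimate
  have key : ∀ δ > (0:ℝ), ∃ N, ∀ t ≥ N, β t * V t ≤ δ := by
    intro δ hδ
    obtain ⟨T, hT, hJT⟩ := F6 (θ * δ / (C + 1)) (div_pos (mul_pos hθ hδ) (by linarith))
    refine ⟨max (max T 1) (2 * |E T| / (θ ^ 2 * δ)), fun t htN => ?_⟩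
    have ht1 : (1:ℝ) ≤ t := le_trans (le_trans (le_max_right T 1) (le_max_left _ _)) htN
    have htT : T ≤ t := le_trans (le_trans (le_max_left T 1) (le_max_left _ _)) htN
    have htM : 2 * |E T| / (θ ^ 2 * δ) ≤ t := le_trans (le_max_right _ _) htN
    have ht₀t : t₀ < t := hT.trans_le htT
    have h1 := F4 t ht₀t
    have h2 := F3 T hT t htT
    have h3 := F5 T hT t htT
    have h4 : t ^ 2 * (θ * C / 2) * J T ≤ θ ^ 2 * δ / 2 * t ^ 2 := by
      have h5 : t ^ 2 * (θ * C / 2) * J T ≤ t ^ 2 * (θ * C / 2) * (θ * δ / (C + 1)) :=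
        mul_le_mul_of_nonneg_left hJT
          (mul_nonneg (by positivity) (div_nonneg (mul_nonneg hθ.le hC0) (by norm_num)))
      have hCC : C / (C + 1) ≤ 1 := by rw [div_le_one (by linarith)]; linarith
      have e : t ^ 2 * (θ * C / 2) * (θ * δ / (C + 1)) = θ ^ 2 * δ / 2 * t ^ 2 * (C / (C + 1)) := by
        field_simp
      nlinarith [h5, hCC, (show (0:ℝ) ≤ θ ^ 2 * δ / 2 * t ^ 2 by positivity)]
    have hMle : E T ≤ θ ^ 2 * δ / 2 * t ^ 2 := by
      rw [div_le_iff₀ (by positivity)] at htM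
      have habs := le_abs_self (E T)
      have htt : t ≤ t ^ 2 := by nlinarith [ht1]
      nlinarith [habs, htM, mul_le_mul_of_nonneg_left htt
        (show (0:ℝ) ≤ θ ^ 2 * δ / 2 by positivity)]
    have hfinal : θ ^ 2 * t ^ 2 * (β t * V t) ≤ θ ^ 2 * t ^ 2 * δ := by linarith
    exact le_of_mul_le_mul_left hfinal (by positivity)
  -- Conclusion 1
  have hconc1 : Tendsto (fun t => β t * V t) atTop (nhds 0) := by
    rw [Metric.tendsto_atTop]
    intro δ hδ
    obtain ⟨N, hN⟩ := key (δ / 2) (by linarith)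
    refine ⟨max N t₀, fun t ht => ?_⟩
    have h1 := hN t (le_trans (le_max_left _ _) ht)
    have h2 : 0 ≤ β t * V t :=
      mul_nonneg (hβpos t (le_trans (le_max_right _ _) ht)).le (hV0 t)
    rw [Real.dist_eq, sub_zero, abs_of_nonneg h2]
    exact lt_of_le_of_lt h1 (half_lt_self hδ)
  -- first-order conditions at the saddle point
  have hgradf : ∀ v, ⟪gradient f xs, v⟫ + ⟪K v, ys⟫ = 0 := by
    intro v
    have hp : HasDerivAt (fun s : ℝ => xs + s • v) v 0 := by
      simpa using ((hasDerivAt_id (0:ℝ)).smul_const v).const_add xs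
    have h1 := grad_chain hf hp
    have h2 : HasDerivAt (fun s : ℝ => ⟪K (xs + s • v), ys⟫) ⟪K v, ys⟫ 0 := by
      have hK := K.hasFDerivAt.comp_hasDerivAt 0 hp
      simpa using hK.inner ℝ (hasDerivAt_const (0:ℝ) ys)
    have hψ := h1.add h2
    simp only [zero_smul, add_zero] at hψ
    have hlm : IsLocalMin (fun s : ℝ => f (xs + s • v) + ⟪K (xs + s • v), ys⟫) 0 := by
      apply Filter.Eventually.of_forall
      intro s
      have := (hsaddle (xs + s • v) ys).2
      simp only [Lag] at this
      simp only [zero_smul, add_zero]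
      linarith
    exact hlm.hasDerivAt_eq_zero hψ
  have hgradg : ∀ w, ⟪K xs, w⟫ - ⟪gradient g ys, w⟫ = 0 := by
    intro w
    have hp : HasDerivAt (fun s : ℝ => ys + s • w) w 0 := by
      simpa using ((hasDerivAt_id (0:ℝ)).smul_const w).const_add ys
    have h1 : HasDerivAt (fun s : ℝ => ⟪K xs, ys + s • w⟫) ⟪K xs, w⟫ 0 := by
      simpa using (hasDerivAt_const (0:ℝ) (K xs)).inner ℝ hp
    have h2 := grad_chain hg hp
    have hψ := h1.sub h2
    simp only [zero_smul, add_zero] at hψ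
    have hlm : IsLocalMax (fun s : ℝ => ⟪K xs, ys + s • w⟫ - g (ys + s • w)) 0 := by
      apply Filter.Eventually.of_forall
      intro s
      have := (hsaddle xs (ys + s • w)).1
      simp only [Lag] at this
      simp only [zero_smul, add_zero]
      linarith
    exact hlm.hasDerivAt_eq_zero hψ
  -- gradient residual bounds
  have hDf : ∀ t, ‖gradient f (x t) - gradient f xs‖ ^ 2 ≤ 2 * L₁ * V t := by
    intro t
    have h := grad_sq_le hf hfconv hL₁ hfLip (x t) xs
    have hid := hgradf (x t - xs)
    have hsad := (hsaddle (x t) (y t)).1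
    simp only [Lag] at hsad
    simp only [map_sub, inner_sub_left, inner_sub_right] at hid
    have hgap : f (x t) - f xs - ⟪gradient f xs, x t - xs⟫ ≤ f (x t) - f xs
        + (g (y t) - g ys) + (⟪K (x t), ys⟫ - ⟪K xs, y t⟫) := by
      rw [inner_sub_right]
      linarith only [hid, hsad]
    calc ‖gradient f (x t) - gradient f xs‖ ^ 2
        ≤ 2 * L₁ * (f (x t) - f xs - ⟪gradient f xs, x t - xs⟫) := h
      _ ≤ 2 * L₁ * (f (x t) - f xs + (g (y t) - g ys) + (⟪K (x t), ys⟫ - ⟪K xs, y t⟫)) := by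
          nlinarith [hgap, hL₁]
      _ = 2 * L₁ * V t := by rw [hVexp t]
  have hDg : ∀ t, ‖gradient g (y t) - gradient g ys‖ ^ 2 ≤ 2 * L₂ * V t := by
    intro t
    have h := grad_sq_le hg hgconv hL₂ hgLip (y t) ys
    have hid := hgradg (y t - ys)
    have hsad := (hsaddle (x t) (y t)).2
    simp only [Lag] at hsad
    simp only [inner_sub_right] at hid
    have hgap : g (y t) - g ys - ⟪gradient g ys, y t - ys⟫ ≤ f (x t) - f xs
        + (g (y t) - g ys) + (⟪K (x t), ys⟫ - ⟪K xs, y t⟫) := by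
      rw [inner_sub_right]
      linarith only [hid, hsad]
    calc ‖gradient g (y t) - gradient g ys‖ ^ 2
        ≤ 2 * L₂ * (g (y t) - g ys - ⟪gradient g ys, y t - ys⟫) := h
      _ ≤ 2 * L₂ * (f (x t) - f xs + (g (y t) - g ys) + (⟪K (x t), ys⟫ - ⟪K xs, y t⟫)) := by
          nlinarith [hgap, hL₂]
      _ = 2 * L₂ * V t := by rw [hVexp t]
  refine ⟨hconc1, ?_, ?_⟩
  · -- Conclusion 2
    intro hne
    have hev : ∃ a > (0:ℝ), ∀ᶠ t in atTop, a ≤ β t := by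
      have h0S : (0:ℝ) ∈ {a : ℝ | ∀ᶠ t in atTop, a ≤ β t} := by
        filter_upwards [eventually_ge_atTop t₀] with t ht using (hβpos t ht).le
      by_cases hbdd : BddAbove {a : ℝ | ∀ᶠ t in atTop, a ≤ β t}
      · have hS0 : 0 ≤ sSup {a : ℝ | ∀ᶠ t in atTop, a ≤ β t} := le_csSup hbdd h0S
        have hne' : sSup {a : ℝ | ∀ᶠ t in atTop, a ≤ β t} ≠ 0 := by
          rw [Filter.liminf_eq] at hne
          exact hne
        have hpos : 0 < sSup {a : ℝ | ∀ᶠ t in atTop, a ≤ β t} := lt_of_le_of_ne hS0 (Ne.symm hne')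
        obtain ⟨a, haS, hagt⟩ := exists_lt_of_lt_csSup ⟨0, h0S⟩ (half_lt_self hpos)
        exact ⟨a, lt_of_lt_of_le (half_pos hpos) hagt.le, haS⟩
      · exfalso
        apply hne
        rw [Filter.liminf_eq]
        exact Real.sSup_of_not_bddAbove hbdd
    obtain ⟨a, ha, haev⟩ := hev
    apply squeeze_zero' (Filter.Eventually.of_forall hV0)
      (g := fun t => β t * V t / a)
    · filter_upwards [haev] with t hat
      rw [le_div_iff₀ ha]
      nlinarith [mul_le_mul_of_nonneg_right hat (hV0 t)]
    · have := hconc1.div_const a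
      simpa using this
  · -- Conclusion 3
    intro hβtop
    have hevβ : ∀ᶠ t in atTop, (1:ℝ) ≤ β t := hβtop.eventually_ge_atTop 1
    refine ⟨?_, ?_, ?_⟩
    · rw [isLittleO_iff]
      intro c hc
      obtain ⟨N, hN⟩ := key c hc
      filter_upwards [eventually_ge_atTop N, hevβ] with t h1 h3
      have hβ0 : (0:ℝ) < β t := by linarith
      have hv := hN t h1
      rw [Real.norm_eq_abs, Real.norm_eq_abs, abs_of_nonneg (hV0 t),
        abs_of_nonneg (by positivity : (0:ℝ) ≤ 1 / β t)]
      rw [mul_one_div, le_div_iff₀ hβ0]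
      linarith [hv]
    · rw [isLittleO_iff]
      intro c hc
      obtain ⟨N, hN⟩ := key (c ^ 2 / (2 * L₁)) (by positivity)
      filter_upwards [eventually_ge_atTop N, hevβ] with t h1 h3
      have hβ0 : (0:ℝ) < β t := by linarith
      have hv := hN t h1
      have hsq : ‖gradient f (x t) - gradient f xs‖ ^ 2 * β t ≤ c ^ 2 := by
        have hmul := mul_le_mul_of_nonneg_right (hDf t) hβ0.le
        have hmul2 := mul_le_mul_of_nonneg_left hv (by positivity : (0:ℝ) ≤ 2 * L₁)
        have he : 2 * L₁ * (c ^ 2 / (2 * L₁)) = c ^ 2 := by field_simp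
        calc _ ≤ 2 * L₁ * V t * β t := hmul
          _ = 2 * L₁ * (β t * V t) := by ring
          _ ≤ 2 * L₁ * (c ^ 2 / (2 * L₁)) := hmul2
          _ = c ^ 2 := he
      have hsβ : 0 < Real.sqrt (β t) := Real.sqrt_pos.2 hβ0
      rw [Real.norm_eq_abs, Real.norm_eq_abs, abs_of_nonneg (norm_nonneg _),
        abs_of_nonneg (by positivity : (0:ℝ) ≤ 1 / Real.sqrt (β t))]
      rw [mul_one_div, le_div_iff₀ hsβ]
      calc ‖gradient f (x t) - gradient f xs‖ * Real.sqrt (β t)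
          = Real.sqrt ((‖gradient f (x t) - gradient f xs‖ * Real.sqrt (β t)) ^ 2) :=
            (Real.sqrt_sq (by positivity)).symm
        _ ≤ Real.sqrt (c ^ 2) := by
            apply Real.sqrt_le_sqrt
            rw [mul_pow, Real.sq_sqrt hβ0.le]
            exact hsq
        _ = c := Real.sqrt_sq hc.le
    · rw [isLittleO_iff]
      intro c hc
      obtain ⟨N, hN⟩ := key (c ^ 2 / (2 * L₂)) (by positivity)
      filter_upwards [eventually_ge_atTop N, hevβ] with t h1 h3
      have hβ0 : (0:ℝ) < β t := by linarith
      have hv := hN t h1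
      have hsq : ‖gradient g (y t) - gradient g ys‖ ^ 2 * β t ≤ c ^ 2 := by
        have hmul := mul_le_mul_of_nonneg_right (hDg t) hβ0.le
        have hmul2 := mul_le_mul_of_nonneg_left hv (by positivity : (0:ℝ) ≤ 2 * L₂)
        have he : 2 * L₂ * (c ^ 2 / (2 * L₂)) = c ^ 2 := by field_simp
        calc _ ≤ 2 * L₂ * V t * β t := hmul
          _ = 2 * L₂ * (β t * V t) := by ring
          _ ≤ 2 * L₂ * (c ^ 2 / (2 * L₂)) := hmul2
          _ = c ^ 2 := he
      have hsβ : 0 < Real.sqrt (β t) := Real.sqrt_pos.2 hβ0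
      rw [Real.norm_eq_abs, Real.norm_eq_abs, abs_of_nonneg (norm_nonneg _),
        abs_of_nonneg (by positivity : (0:ℝ) ≤ 1 / Real.sqrt (β t))]
      rw [mul_one_div, le_div_iff₀ hsβ]
      calc ‖gradient g (y t) - gradient g ys‖ * Real.sqrt (β t)
          = Real.sqrt ((‖gradient g (y t) - gradient g ys‖ * Real.sqrt (β t)) ^ 2) :=
            (Real.sqrt_sq (by positivity)).symm
        _ ≤ Real.sqrt (c ^ 2) := by
            apply Real.sqrt_le_sqrt
            rw [mul_pow, Real.sq_sqrt hβ0.le]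
            exact hsq
        _ = c := Real.sqrt_sq hc.le
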